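/- Let 𝔥 be a Lie algebra over ℝ in which all double brackets vanish: ⁅⁅u,v⁆,w⁆ = 0 for all u, v, w ∈ 𝔥 (2-step nilpotent), equipped with the product u * v := u + v + (1/2)⁅u,v⁆. Let Y = ⁅𝔥,𝔥⁆ be the derived ideal (the linear span of all brackets) and let X be a linear subspace of 𝔥 complementary to Y, so 𝔥 = X ⊕ Y. Let φ : 𝔥 → 𝔥 be a bijective linear map preserving the bracket (φ⁅u,v⁆ = ⁅φ(u),φ(v)⁆) with φ(X) = X, let b ∈ 𝔥, and define f : 𝔥 → 𝔥 by f(v) = φ(v) * b. Let Γ ⊆ 𝔥 be a subset whose linear span is all of 𝔥 and such that the linear span of Γ ∩ Y is all of Y. If f(v * γ) = f(v) * γ for every v ∈ 𝔥 and every γ ∈ Γ, then φ is the identity map and ⁅b,x⁆ = 0 for all x ∈ 𝔥; consequently f(v) = v + b is translation by the central element b. -/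
import Mathlib


/-- In the BCH group of a 2-step nilpotent real Lie algebra `𝔥` with derived
ideal `Y = ⁅𝔥,𝔥⁆` and a complement `X`, if `f(v) = φ(v) * b` (with `φ` a bracket-preserving
linear automorphism preserving `X`) commutes with right translation by every element of a
set `Γ` spanning `𝔥` whose intersection with `Y` spans `Y`, then `φ = id`, `b` is central,
and `f` is translation by `b`. -/
theorem stmt_10 (𝔥 : Type*) [LieRing 𝔥] [LieAlgebra ℝ 𝔥]
    (h2 : ∀ u v w : 𝔥, ⁅⁅u, v⁆, w⁆ = 0)
    (mul : 𝔥 → 𝔥 → 𝔥) (hmul : ∀ u v, mul u v = u + v + (1 / 2 : ℝ) • ⁅u, v⁆)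
    (Y : Submodule ℝ 𝔥) (hY : Y = Submodule.span ℝ {x : 𝔥 | ∃ u v : 𝔥, x = ⁅u, v⁆})
    (X : Submodule ℝ 𝔥) (hXY : IsCompl X Y)
    (φ : 𝔥 ≃ₗ[ℝ] 𝔥) (hφ : ∀ u v : 𝔥, φ ⁅u, v⁆ = ⁅φ u, φ v⁆)
    (hX : Submodule.map (φ : 𝔥 →ₗ[ℝ] 𝔥) X = X)
    (b : 𝔥) (f : 𝔥 → 𝔥) (hf : ∀ v, f v = mul (φ v) b)
    (Γ : Set 𝔥) (hΓ : Submodule.span ℝ Γ = ⊤)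
    (hΓY : Submodule.span ℝ (Γ ∩ (Y : Set 𝔥)) = Y)
    (hequiv : ∀ v : 𝔥, ∀ γ ∈ Γ, f (mul v γ) = mul (f v) γ) :
    (∀ v : 𝔥, φ v = v) ∧ (∀ x : 𝔥, ⁅b, x⁆ = 0) ∧ (∀ v : 𝔥, f v = v + b) := by
  -- Every element of Y is central
  have ycentral : ∀ y ∈ Y, ∀ u : 𝔥, ⁅y, u⁆ = 0 := by
    intro y hy
    rw [hY] at hy
    induction hy using Submodule.span_induction with
    | mem x hx => obtain ⟨u, v, rfl⟩ := hx; intro w; exact h2 u v w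
    | zero => intro u; simp
    | add x y _ _ hx hy => intro u; rw [add_lie, hx, hy, add_zero]
    | smul a x _ hx => intro u; rw [smul_lie, hx, smul_zero]
  have ycentral' : ∀ y ∈ Y, ∀ u : 𝔥, ⁅u, y⁆ = 0 := by
    intro y hy u
    rw [← lie_skew, ycentral y hy u, neg_zero]
  have bracket_mem_Y : ∀ u v : 𝔥, ⁅u, v⁆ ∈ Y := by
    intro u v
    rw [hY]
    exact Submodule.subset_span ⟨u, v, rfl⟩
  have phiYmem : ∀ y ∈ Y, φ y ∈ Y := by
    intro y hy
    rw [hY] at hy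
    induction hy using Submodule.span_induction with
    | mem x hx => obtain ⟨u, v, rfl⟩ := hx; rw [hφ]; exact bracket_mem_Y _ _
    | zero => simp
    | add x y _ _ hx hy => rw [map_add]; exact Y.add_mem hx hy
    | smul a x _ hx => rw [map_smul]; exact Y.smul_mem a hx
  -- The key equation from equivariance at v = 0
  have keyA : ∀ γ ∈ Γ, φ γ + (1 / 2 : ℝ) • ⁅φ γ, b⁆ = γ + (1 / 2 : ℝ) • ⁅b, γ⁆ := by
    intro γ hγ
    have h := hequiv 0 γ hγ
    have hmz : mul 0 γ = γ := by rw [hmul]; simp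
    have hfz : f 0 = b := by rw [hf, map_zero, hmul]; simp
    rw [hmz, hfz, hf, hmul, hmul] at h
    -- h : φ γ + b + s•⁅φ γ, b⁆ = b + γ + s•⁅b, γ⁆
    have h' : φ γ + (1 / 2 : ℝ) • ⁅φ γ, b⁆ + b = γ + (1 / 2 : ℝ) • ⁅b, γ⁆ + b := by
      rw [show φ γ + (1/2:ℝ) • ⁅φ γ, b⁆ + b = φ γ + b + (1/2:ℝ) • ⁅φ γ, b⁆ by abel, h]
      abel
    exact add_right_cancel h'
  -- φ is the identity on Y
  have phiY : ∀ y ∈ Y, φ y = y := by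
    intro y hy
    rw [← hΓY] at hy
    induction hy using Submodule.span_induction with
    | mem x hx =>
        obtain ⟨hxΓ, hxY⟩ := hx
        have hk := keyA x hxΓ
        rw [ycentral (φ x) (phiYmem x hxY) b, ycentral' x hxY b] at hk
        simpa using hk
    | zero => simp
    | add x y _ _ hx hy => rw [map_add, hx, hy]
    | smul a x _ hx => rw [map_smul, hx]
  -- φ is the identity on Γ
  have phiG : ∀ γ ∈ Γ, φ γ = γ := by
    intro γ hγ
    have hsub : φ γ - γ ∈ Y := by
      have hk := keyA γ hγ
      have : φ γ - γ = (1/2:ℝ) • ⁅b, γ⁆ - (1/2:ℝ) • ⁅φ γ, b⁆ := by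
        rw [sub_eq_sub_iff_add_eq_add, hk]; abel
      rw [this]
      exact Y.sub_mem (Y.smul_mem _ (bracket_mem_Y _ _)) (Y.smul_mem _ (bracket_mem_Y _ _))
    have hγ' : γ ∈ X ⊔ Y := by rw [hXY.sup_eq_top]; trivial
    obtain ⟨x, hx, y, hy, rfl⟩ := Submodule.mem_sup.mp hγ'
    have hφx : φ x ∈ X := by rw [← hX]; exact ⟨x, hx, rfl⟩
    have hsubX : φ (x + y) - (x + y) ∈ X := by
      rw [map_add, phiY y hy, show φ x + y - (x + y) = φ x - x by abel]
      exact X.sub_mem hφx hx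
    have hmem : φ (x + y) - (x + y) ∈ X ⊓ Y := ⟨hsubX, hsub⟩
    rw [hXY.inf_eq_bot, Submodule.mem_bot] at hmem
    exact sub_eq_zero.mp hmem
  -- φ is the identity everywhere
  have phiAll : ∀ v : 𝔥, φ v = v := by
    intro v
    have hv : v ∈ Submodule.span ℝ Γ := by rw [hΓ]; trivial
    induction hv using Submodule.span_induction with
    | mem x hx => exact phiG x hx
    | zero => simp
    | add x y _ _ hx hy => rw [map_add, hx, hy]
    | smul a x _ hx => rw [map_smul, hx]
  -- b is central
  have bG : ∀ γ ∈ Γ, ⁅b, γ⁆ = 0 := by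
    intro γ hγ
    have hk := keyA γ hγ
    rw [phiAll γ] at hk
    have h1 : (1/2:ℝ) • ⁅γ, b⁆ = (1/2:ℝ) • ⁅b, γ⁆ := add_left_cancel hk
    rw [← lie_skew b γ, smul_neg] at h1
    have h3 : (1/2:ℝ) • ⁅γ, b⁆ + (1/2:ℝ) • ⁅γ, b⁆ = 0 := by
      nth_rewrite 1 [h1]; abel
    rw [← add_smul] at h3
    norm_num at h3
    rw [← lie_skew b γ, h3, neg_zero]
  have bAll : ∀ x : 𝔥, ⁅b, x⁆ = 0 := by
    intro v
    have hv : v ∈ Submodule.span ℝ Γ := by rw [hΓ]; trivial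
    induction hv using Submodule.span_induction with
    | mem x hx => exact bG x hx
    | zero => simp
    | add x y _ _ hx hy => rw [lie_add, hx, hy, add_zero]
    | smul a x _ hx => rw [lie_smul, hx, smul_zero]
  refine ⟨phiAll, bAll, fun v => ?_⟩
  rw [hf, hmul, phiAll, ← lie_skew v b, bAll, neg_zero, smul_zero, add_zero]
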